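/- Let {μ_j} be a sequence of Radon measures on ℝⁿ with 0 ∈ supp μ_j and μ_j(B(0,1)) ≥ A₁ > 0 for all j, and suppose each μ_j is uniformly doubling: μ_j(B(q,2r)) ≤ A₂ μ_j(B(q,r)) for all j, all q ∈ supp μ_j and r > 0. If μ_j converges weakly to a Radon measure μ_∞, then μ_∞ is doubling and supp μ_j → supp μ_∞ in the local Hausdorff sense. -/

import Mathlib

/-!
Vague convergence gives the portmanteau inequalities `ν K ≤ liminf μ_j U` and
`limsup μ_j K ≤ ν U` for compact `K ⊆ U` open. Iterating the doubling inequality from the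
normalised ball `B(0,1)` bounds `μ_j(B(q,r))` from below uniformly in `j` and in `q ∈ supp μ_j`
bounded, so limits of points of `supp μ_j` lie in `supp μ_∞`; conversely every ball around a
point of `supp μ_∞` has positive limit mass, hence meets `supp μ_j` for large `j`. Compactness
turns these two pointwise statements into local Hausdorff convergence. Finally, doubling passes
to the limit by applying it for `μ_j` at a point of `supp μ_j` close to `q` and sandwiching
between slightly smaller closed and larger open balls.
-/

open MeasureTheory Metric Filter NNReal ENNReal

def msupp {n : ℕ} (μ : Measure (EuclideanSpace ℝ (Fin n))) : Set (EuclideanSpace ℝ (Fin n)) :=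
  {x | ∀ r : ℝ, 0 < r → 0 < μ (ball x r)}

open Topology

lemma msupp_eq_support {n : ℕ} (μ : Measure (EuclideanSpace ℝ (Fin n))) :
    msupp μ = μ.support := by
  ext x
  exact nhds_basis_ball.mem_measureSupport.symm

lemma tendsto_biSup_of_eventually_forall_le {ι α : Type*} {l : Filter ι} {T : ι → Set α}
    {d : ι → α → ℝ} (hd : ∀ i x, 0 ≤ d i x) (h : ∀ ε > 0, ∀ᶠ i in l, ∀ x ∈ T i, d i x ≤ ε) :
    Tendsto (fun i => ⨆ x ∈ T i, d i x) l (𝓝 0) := by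
  have hsup_nonneg : ∀ i, 0 ≤ ⨆ x ∈ T i, d i x :=
    fun i => Real.iSup_nonneg fun x => Real.iSup_nonneg fun _ => hd i x
  refine tendsto_order.2 ⟨fun a ha => .of_forall fun i => ha.trans_le (hsup_nonneg i),
    fun ε hε => (h (ε / 2) (half_pos hε)).mono fun i hi => ?_⟩
  refine lt_of_le_of_lt ?_ (half_lt_self hε)
  exact Real.iSup_le (fun x => Real.iSup_le (hi x) (half_pos hε).le) (half_pos hε).le

lemma IsCompact.exists_subseq_tendsto_of_not_eventually {X : Type*} [TopologicalSpace X]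
    [FirstCountableTopology X] {K : Set X} (hK : IsCompact K) {S : ℕ → Set X}
    {Q : ℕ → X → Prop} (h : ¬∀ᶠ j in atTop, ∀ x ∈ S j ∩ K, Q j x) :
    ∃ φ : ℕ → ℕ, StrictMono φ ∧ ∃ (x : ℕ → X) (z : X),
      (∀ k, x k ∈ S (φ k) ∩ K ∧ ¬Q (φ k) (x k)) ∧ Tendsto x atTop (𝓝 z) := by
  obtain ⟨φ, hφ, hφQ⟩ := extraction_of_frequently_atTop (not_eventually.1 h)
  simp only [not_forall] at hφQ
  choose x hx hxQ using hφQ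
  obtain ⟨z, -, ψ, hψ, hxz⟩ := hK.tendsto_subseq fun k => (hx k).2
  exact ⟨φ ∘ ψ, hφ.comp hψ, x ∘ ψ, z, fun k => ⟨hx (ψ k), hxQ (ψ k)⟩, hxz⟩

section Vague

variable {X ι : Type*} [TopologicalSpace X] [MeasurableSpace X]

def VaguelyTendsto (μ : ι → Measure X) (l : Filter ι) (ν : Measure X) : Prop :=
  ∀ f : X → ℝ, Continuous f → HasCompactSupport f →
    Tendsto (fun i => ∫ x, f x ∂μ i) l (𝓝 (∫ x, f x ∂ν))

lemma VaguelyTendsto.comp {μ : ι → Measure X} {l : Filter ι} {ν : Measure X}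
    (h : VaguelyTendsto μ l ν) {κ : Type*} {l' : Filter κ} {φ : κ → ι} (hφ : Tendsto φ l' l) :
    VaguelyTendsto (fun k => μ (φ k)) l' ν :=
  fun f hf hfs => (h f hf hfs).comp hφ

variable [T2Space X] [LocallyCompactSpace X] [OpensMeasurableSpace X]

lemma exists_hasCompactSupport_measure_le_integral_le {K U : Set X} (hK : IsCompact K)
    (hU : IsOpen U) (hKU : K ⊆ U) :
    ∃ f : X → ℝ, Continuous f ∧ HasCompactSupport f ∧
      ∀ (μ : Measure X) [IsFiniteMeasureOnCompacts μ],
        μ K ≤ ENNReal.ofReal (∫ x, f x ∂μ) ∧ ENNReal.ofReal (∫ x, f x ∂μ) ≤ μ U := by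
  obtain ⟨f, hfK, hfU, hfs, hf01⟩ := exists_continuous_one_zero_of_isCompact hK
    hU.isClosed_compl (Set.disjoint_compl_right_iff_subset.2 hKU)
  refine ⟨f, f.continuous, hfs, fun μ _ => ?_⟩
  rw [ofReal_integral_eq_lintegral_ofReal (f.continuous.integrable_of_hasCompactSupport hfs)
    (.of_forall fun x => (hf01 x).1)]
  constructor
  · rw [← lintegral_indicator_one hK.isClosed.measurableSet]
    refine lintegral_mono fun x => ?_
    by_cases hx : x ∈ K
    · simp [hx, hfK hx]
    · simp [hx]
  · rw [← lintegral_indicator_one hU.measurableSet]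
    refine lintegral_mono fun x => ?_
    by_cases hx : x ∈ U
    · simpa [hx] using (hf01 x).2
    · simp [hx, hfU hx]

variable {μ : ι → Measure X} {l : Filter ι} {ν : Measure X} [l.NeBot]
  [∀ i, IsFiniteMeasureOnCompacts (μ i)] [IsFiniteMeasureOnCompacts ν]

theorem VaguelyTendsto.measure_le_liminf (h : VaguelyTendsto μ l ν) {K U : Set X}
    (hK : IsCompact K) (hU : IsOpen U) (hKU : K ⊆ U) :
    ν K ≤ liminf (fun i => μ i U) l := by
  obtain ⟨f, hfc, hfs, hf⟩ := exists_hasCompactSupport_measure_le_integral_le hK hU hKU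
  calc ν K ≤ ENNReal.ofReal (∫ x, f x ∂ν) := (hf ν).1
    _ = liminf (fun i => ENNReal.ofReal (∫ x, f x ∂μ i)) l :=
      ((ENNReal.tendsto_ofReal (h f hfc hfs)).liminf_eq).symm
    _ ≤ liminf (fun i => μ i U) l := liminf_le_liminf (.of_forall fun i => (hf (μ i)).2)

theorem VaguelyTendsto.limsup_le_measure (h : VaguelyTendsto μ l ν) {K U : Set X}
    (hK : IsCompact K) (hU : IsOpen U) (hKU : K ⊆ U) :
    limsup (fun i => μ i K) l ≤ ν U := by
  obtain ⟨f, hfc, hfs, hf⟩ := exists_hasCompactSupport_measure_le_integral_le hK hU hKU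
  calc limsup (fun i => μ i K) l ≤ limsup (fun i => ENNReal.ofReal (∫ x, f x ∂μ i)) l :=
        limsup_le_limsup (.of_forall fun i => (hf (μ i)).1)
    _ = ENNReal.ofReal (∫ x, f x ∂ν) := (ENNReal.tendsto_ofReal (h f hfc hfs)).limsup_eq
    _ ≤ ν U := (hf ν).2

end Vague

section Doubling

variable {X : Type*} [MetricSpace X] [MeasurableSpace X]

def IsDoublingOnSupport (μ : Measure X) (A : ℝ≥0) : Prop :=
  ∀ q ∈ μ.support, ∀ r : ℝ, 0 < r → μ (ball q (2 * r)) ≤ A * μ (ball q r)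

variable {μ : Measure X} {A : ℝ≥0} {p q : X}

lemma IsDoublingOnSupport.measure_ball_two_pow_mul_le (h : IsDoublingOnSupport μ A)
    (hq : q ∈ μ.support) {r : ℝ} (hr : 0 < r) (k : ℕ) :
    μ (ball q (2 ^ k * r)) ≤ A ^ k * μ (ball q r) := by
  induction k with
  | zero => simp
  | succ k ih =>
    calc μ (ball q (2 ^ (k + 1) * r)) = μ (ball q (2 * (2 ^ k * r))) := by ring_nf
      _ ≤ A * μ (ball q (2 ^ k * r)) := h q hq _ (by positivity)
      _ ≤ A * (A ^ k * μ (ball q r)) := by gcongr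
      _ = A ^ (k + 1) * μ (ball q r) := by ring

lemma IsDoublingOnSupport.measure_ball_div_pow_le (h : IsDoublingOnSupport μ A)
    (hq : q ∈ μ.support) {r s : ℝ} (hr : 0 < r) {k : ℕ} (hk : s + dist p q ≤ 2 ^ k * r) :
    μ (ball p s) / A ^ k ≤ μ (ball q r) := by
  refine ENNReal.div_le_of_le_mul' ?_
  exact (measure_mono (ball_subset_ball' hk)).trans (h.measure_ball_two_pow_mul_le hq hr k)

lemma IsDoublingOnSupport.measure_ball_le_of_dist_le (h : IsDoublingOnSupport μ A)
    (hp : p ∈ μ.support) {t δ : ℝ} (ht : 0 < t) (hpq : dist p q ≤ δ) :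
    μ (ball q (2 * t - δ)) ≤ A * μ (closedBall q (t + δ)) :=
  calc μ (ball q (2 * t - δ)) ≤ μ (ball p (2 * t)) :=
        measure_mono (ball_subset_ball' (by rw [dist_comm]; linarith))
    _ ≤ A * μ (ball p t) := h p hp t ht
    _ ≤ A * μ (closedBall q (t + δ)) := by
        gcongr
        exact (ball_subset_ball' (by linarith)).trans ball_subset_closedBall

lemma exists_pos_le_measure_ball {ι : Type*} {μ : ι → Measure X}
    (hμ : ∀ i, IsDoublingOnSupport (μ i) A) {m : ℝ≥0∞} (hm : m ≠ 0) {s : ℝ}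
    (hmμ : ∀ i, m ≤ μ i (ball p s)) (R : ℝ) {r : ℝ} (hr : 0 < r) :
    ∃ c > 0, ∀ i, ∀ q ∈ (μ i).support ∩ closedBall p R, c ≤ μ i (ball q r) := by
  obtain ⟨k, hk⟩ := pow_unbounded_of_one_lt ((s + R) / r) one_lt_two
  refine ⟨m / A ^ k, ENNReal.div_pos hm (pow_ne_top coe_ne_top), fun i q hq => ?_⟩
  have hks : s + dist p q ≤ 2 ^ k * r := by
    rw [div_lt_iff₀ hr] at hk
    linarith [mem_closedBall'.1 hq.2]
  exact (ENNReal.div_le_div_right (hmμ i) _).trans ((hμ i).measure_ball_div_pow_le hq.1 hr hks)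

lemma measure_ball_le_of_forall_measure_closedBall_le [ProperSpace X]
    [μ.Regular] {s : ℝ} {m : ℝ≥0∞}
    (h : ∀ a, 0 < a → a < s → μ (closedBall q a) ≤ m) : μ (ball q s) ≤ m := by
  rcases le_or_gt s 0 with hs | hs
  · simp [ball_eq_empty.2 hs]
  rw [isOpen_ball.measure_eq_iSup_isCompact]
  refine iSup₂_le fun K hKs => iSup_le fun hK => ?_
  obtain ⟨a, has, hKa⟩ := exists_lt_subset_ball hK.isClosed hKs
  calc μ K ≤ μ (closedBall q (max a (s / 2))) :=
        measure_mono (hKa.trans ((ball_subset_ball (le_max_left _ _)).trans ball_subset_closedBall))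
    _ ≤ m := h _ (lt_max_of_lt_right (half_pos hs)) (max_lt has (half_lt_self hs))

end Doubling

section Limit

variable {X ι : Type*} [MetricSpace X] [ProperSpace X] [MeasurableSpace X] [BorelSpace X]
  {μ : ι → Measure X} {l : Filter ι} {ν : Measure X} [l.NeBot]
  [∀ i, IsFiniteMeasureOnCompacts (μ i)] [IsFiniteMeasureOnCompacts ν]

theorem VaguelyTendsto.eventually_exists_mem_support_dist_lt (h : VaguelyTendsto μ l ν) {q : X}
    (hq : q ∈ ν.support) {δ : ℝ} (hδ : 0 < δ) :
    ∀ᶠ i in l, ∃ p ∈ (μ i).support, dist p q < δ := by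
  by_contra hcon
  have hnull : ∃ᶠ i in l, μ i (ball q δ) ≤ 0 := (not_eventually.1 hcon).mono fun i hi => by
    by_contra hpos
    obtain ⟨p, hpq, hp⟩ := Measure.nonempty_inter_support_of_pos (not_le.1 hpos)
    exact hi ⟨p, hp, hpq⟩
  have hpos : 0 < ν (ball q (δ / 2)) := nhds_basis_ball.mem_measureSupport.1 hq _ (half_pos hδ)
  have hzero : ν (closedBall q (δ / 2)) ≤ 0 :=
    (h.measure_le_liminf (isCompact_closedBall _ _) isOpen_ball
      (closedBall_subset_ball (half_lt_self hδ))).trans (liminf_le_of_frequently_le' hnull)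
  exact hpos.not_ge ((measure_mono ball_subset_closedBall).trans hzero)

theorem VaguelyTendsto.mem_support_of_tendsto (h : VaguelyTendsto μ l ν) {x : ι → X} {z : X}
    (hx : Tendsto x l (𝓝 z)) (hlb : ∀ r > 0, ∃ c > 0, ∀ᶠ i in l, c ≤ μ i (ball (x i) r)) :
    z ∈ ν.support := by
  refine nhds_basis_ball.mem_measureSupport.2 fun r hr => ?_
  obtain ⟨c, hc, hcμ⟩ := hlb (r / 4) (by positivity)
  have hnear : ∀ᶠ i in l, ball (x i) (r / 4) ⊆ closedBall z (r / 2) :=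
    (hx.eventually (ball_mem_nhds z (by positivity : 0 < r / 4))).mono fun i hi =>
      (ball_subset_ball' (by linarith [mem_ball.1 hi])).trans ball_subset_closedBall
  calc 0 < c := hc
    _ ≤ limsup (fun i => μ i (closedBall z (r / 2))) l :=
      le_limsup_of_frequently_le' ((hcμ.and hnear).mono fun i hi =>
        hi.1.trans (measure_mono hi.2)).frequently
    _ ≤ ν (ball z r) :=
      h.limsup_le_measure (isCompact_closedBall _ _) isOpen_ball
        (closedBall_subset_ball (half_lt_self hr))

theorem VaguelyTendsto.isDoublingOnSupport (h : VaguelyTendsto μ l ν) {A : ℝ≥0}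
    (hμ : ∀ i, IsDoublingOnSupport (μ i) A) : IsDoublingOnSupport ν A := by
  intro q hq r hr
  refine measure_ball_le_of_forall_measure_closedBall_le fun a ha har => ?_
  -- doubling is applied at a point of `supp μ i` within `δ` of `q`, at radius `t`
  obtain ⟨δ, t, hδ, ht, hδt, htr⟩ : ∃ δ t : ℝ, 0 < δ ∧ 0 < t ∧ a + 2 * δ = 2 * t ∧ t + δ < r :=
    ⟨(2 * r - a) / 6, (a + r) / 3, by linarith, by linarith, by ring, by linarith⟩
  have hnear : ∀ᶠ i in l, μ i (ball q (2 * t - δ)) ≤ A * μ i (closedBall q (t + δ)) :=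
    (h.eventually_exists_mem_support_dist_lt hq hδ).mono fun i ⟨p, hp, hpq⟩ =>
      (hμ i).measure_ball_le_of_dist_le hp ht hpq.le
  calc ν (closedBall q a) ≤ liminf (fun i => μ i (ball q (2 * t - δ))) l :=
        h.measure_le_liminf (isCompact_closedBall _ _) isOpen_ball
          (closedBall_subset_ball (by linarith))
    _ ≤ liminf (fun i => A * μ i (closedBall q (t + δ))) l := liminf_le_liminf hnear
    _ ≤ limsup (fun i => A * μ i (closedBall q (t + δ))) l := liminf_le_limsup
    _ = A * limsup (fun i => μ i (closedBall q (t + δ))) l :=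
        ENNReal.limsup_const_mul_of_ne_top coe_ne_top
    _ ≤ A * ν (ball q r) := by
        gcongr
        exact h.limsup_le_measure (isCompact_closedBall _ _) isOpen_ball
          (closedBall_subset_ball htr)

end Limit

section Hausdorff

variable {X : Type*} [MetricSpace X] [ProperSpace X] [MeasurableSpace X] [BorelSpace X]
  {μ : ℕ → Measure X} {ν : Measure X}
  [∀ j, IsFiniteMeasureOnCompacts (μ j)] [IsFiniteMeasureOnCompacts ν] {K : Set X} {ε : ℝ}

theorem VaguelyTendsto.eventually_forall_infDist_limit_support_le (h : VaguelyTendsto μ atTop ν)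
    (hK : IsCompact K)
    (hlb : ∀ r > 0, ∃ c > 0, ∀ j, ∀ q ∈ (μ j).support ∩ K, c ≤ μ j (ball q r))
    (hε : 0 < ε) : ∀ᶠ j in atTop, ∀ x ∈ (μ j).support ∩ K, infDist x ν.support ≤ ε := by
  by_contra hcon
  obtain ⟨φ, hφ, x, z, hx, hxz⟩ := hK.exists_subseq_tendsto_of_not_eventually hcon
  have hz : z ∈ ν.support := (h.comp hφ.tendsto_atTop).mem_support_of_tendsto hxz
    fun r hr => (hlb r hr).imp fun c ⟨hc, hcμ⟩ => ⟨hc, .of_forall fun k => hcμ _ _ (hx k).1⟩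
  have hlim : Tendsto (fun k => infDist (x k) ν.support) atTop (𝓝 0) := by
    rw [← infDist_zero_of_mem hz]
    exact ((continuous_infDist_pt ν.support).tendsto z).comp hxz
  exact hε.not_ge (ge_of_tendsto hlim (.of_forall fun k => (not_le.1 (hx k).2).le))

theorem VaguelyTendsto.eventually_forall_infDist_support_le (h : VaguelyTendsto μ atTop ν)
    (hK : IsCompact K) (hε : 0 < ε) :
    ∀ᶠ j in atTop, ∀ x ∈ ν.support ∩ K, infDist x (μ j).support ≤ ε := by
  by_contra hcon
  obtain ⟨φ, hφ, x, z, hx, hxz⟩ := hK.exists_subseq_tendsto_of_not_eventually hcon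
  have hz : z ∈ ν.support :=
    Measure.isClosed_support.mem_of_tendsto hxz (.of_forall fun k => (hx k).1.1)
  obtain ⟨k, ⟨p, hp, hpz⟩, hxk⟩ :=
    ((hφ.tendsto_atTop.eventually (h.eventually_exists_mem_support_dist_lt hz (half_pos hε))).and
      (hxz.eventually (ball_mem_nhds z (half_pos hε)))).exists
  linarith [not_le.1 (hx k).2, infDist_le_dist_of_mem hp (x := x k),
    dist_triangle_right (x k) p z, mem_ball.1 hxk]

end Hausdorff

theorem stmt2_general (n : ℕ) (μ : ℕ → Measure (EuclideanSpace ℝ (Fin n)))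
    (μlim : Measure (EuclideanSpace ℝ (Fin n)))
    (hloc : ∀ j, IsFiniteMeasureOnCompacts (μ j)) (hloclim : IsFiniteMeasureOnCompacts μlim)
    (A₁ : ℝ) (hA₁ : 0 < A₁) (A₂ : ℝ≥0)
    (hA1 : ∀ j, ENNReal.ofReal A₁ ≤ μ j (ball 0 1))
    (hdb : ∀ j, ∀ q ∈ msupp (μ j), ∀ r : ℝ, 0 < r →
      μ j (ball q (2 * r)) ≤ (A₂ : ℝ≥0∞) * μ j (ball q r))
    (hweak : ∀ f : EuclideanSpace ℝ (Fin n) → ℝ, Continuous f → HasCompactSupport f →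
      Tendsto (fun j => ∫ x, f x ∂(μ j)) atTop (nhds (∫ x, f x ∂μlim))) :
    (∃ A : ℝ≥0, ∀ q ∈ msupp μlim, ∀ r : ℝ, 0 < r →
      μlim (ball q (2 * r)) ≤ (A : ℝ≥0∞) * μlim (ball q r)) ∧
    (∀ R : ℝ, 0 < R →
      Tendsto (fun j => ⨆ x ∈ msupp (μ j) ∩ ball 0 R, infDist x (msupp μlim)) atTop (nhds 0) ∧
      Tendsto (fun j => ⨆ x ∈ msupp μlim ∩ ball 0 R, infDist x (msupp (μ j))) atTop (nhds 0)) := by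
  simp only [msupp_eq_support] at hdb ⊢
  have hμ : VaguelyTendsto μ atTop μlim := hweak
  have hdoub : ∀ j, IsDoublingOnSupport (μ j) A₂ := hdb
  have hK (R : ℝ) : IsCompact (closedBall (0 : EuclideanSpace ℝ (Fin n)) R) :=
    isCompact_closedBall 0 R
  refine ⟨⟨A₂, hμ.isDoublingOnSupport hdoub⟩, fun R _ => ⟨?_, ?_⟩⟩
  · refine tendsto_biSup_of_eventually_forall_le (fun _ _ => infDist_nonneg) fun ε hε => ?_
    have hlb (r : ℝ) (hr : 0 < r) := exists_pos_le_measure_ball hdoub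
      (ENNReal.ofReal_pos.2 hA₁).ne' hA1 R hr
    filter_upwards [hμ.eventually_forall_infDist_limit_support_le (hK R) hlb hε] with j hj x hx
    exact hj x ⟨hx.1, ball_subset_closedBall hx.2⟩
  · refine tendsto_biSup_of_eventually_forall_le (fun _ _ => infDist_nonneg) fun ε hε => ?_
    filter_upwards [hμ.eventually_forall_infDist_support_le (hK R) hε] with j hj x hx
    exact hj x ⟨hx.1, ball_subset_closedBall hx.2⟩

/-- If `μ_j` are Radon measures with `0 ∈ supp μ_j`, `μ_j(B(0,1)) ≥ A₁ > 0`,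
uniformly doubling with constant `A₂`, and `μ_j ⇀ μ_∞` weakly, then `μ_∞` is doubling and
`supp μ_j → supp μ_∞` in the local Hausdorff sense. -/
theorem stmt2 (n : ℕ) (μ : ℕ → Measure (EuclideanSpace ℝ (Fin n)))
    (μlim : Measure (EuclideanSpace ℝ (Fin n)))
    (hloc : ∀ j, IsFiniteMeasureOnCompacts (μ j)) (hloclim : IsFiniteMeasureOnCompacts μlim)
    (A₁ : ℝ) (hA₁ : 0 < A₁) (A₂ : ℝ≥0)
    (h0 : ∀ j, (0 : EuclideanSpace ℝ (Fin n)) ∈ msupp (μ j))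
    (hA1 : ∀ j, ENNReal.ofReal A₁ ≤ μ j (ball 0 1))
    (hdb : ∀ j, ∀ q ∈ msupp (μ j), ∀ r : ℝ, 0 < r →
      μ j (ball q (2 * r)) ≤ (A₂ : ℝ≥0∞) * μ j (ball q r))
    (hweak : ∀ f : EuclideanSpace ℝ (Fin n) → ℝ, Continuous f → HasCompactSupport f →
      Tendsto (fun j => ∫ x, f x ∂(μ j)) atTop (nhds (∫ x, f x ∂μlim))) :
    (∃ A : ℝ≥0, ∀ q ∈ msupp μlim, ∀ r : ℝ, 0 < r →
      μlim (ball q (2 * r)) ≤ (A : ℝ≥0∞) * μlim (ball q r)) ∧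
    (∀ R : ℝ, 0 < R →
      Tendsto (fun j => ⨆ x ∈ msupp (μ j) ∩ ball 0 R, infDist x (msupp μlim)) atTop (nhds 0) ∧
      Tendsto (fun j => ⨆ x ∈ msupp μlim ∩ ball 0 R, infDist x (msupp (μ j))) atTop (nhds 0)) :=
  stmt2_general n μ μlim hloc hloclim A₁ hA₁ A₂ hA1 hdb hweak
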